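/- arXiv:2605.11172 — 3 statements merged into one kernel-verified Lean document; each statement's English description precedes it below -/
import Mathlib

section
/- If h : ℝⁿ → ℝ ∪ {∞} is proper, closed, and μ-strongly convex with respect to a norm ‖·‖, then its Fenchel conjugate h* is everywhere finite, differentiable, and (1/μ)-smooth with respect to the dual norm: for all θ, θ', h*(θ') ≤ h*(θ) + ⟨θ'−θ, ∇h*(θ)⟩ + (1/(2μ))‖θ'−θ‖_*². -/
/-
Since `N` dominates a multiple of the Euclidean norm (finite dimension), strong convexity makes
`y ↦ h y - ⟪θ, y⟫` grow quadratically away from any point of the domain of `h`, so by lower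
semicontinuity it attains its minimum at some `g θ`, and `h* θ = ⟪θ, g θ⟫ - h (g θ)` is finite.
At a minimiser, strong convexity upgrades minimality to quadratic growth:
`h y - ⟪θ, y⟫ ≥ h (g θ) - ⟪θ, g θ⟫ + μ/2 · N (y - g θ)²`. Taking `y = g θ'`, bounding
`⟪θ' - θ, g θ' - g θ⟫ ≤ ‖θ' - θ‖_* N (g θ' - g θ)` and using `d u - μ u²/2 ≤ d²/(2μ)` gives the
smoothness inequality; the definition of `h*` gives the matching lower bound
`h* θ' ≥ h* θ + ⟪θ' - θ, g θ⟫`, and this two-sided quadratic sandwich makes `g θ` the gradient.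
-/

open RealInnerProductSpace Metric Set Filter Topology

section NormedSpace

variable {E : Type*} [NormedAddCommGroup E] [NormedSpace ℝ E]

theorem Seminorm.exists_pos_mul_norm_le [FiniteDimensional ℝ E] (p : Seminorm ℝ E)
    (hp : ∀ x, p x = 0 → x = 0) : ∃ a, 0 < a ∧ ∀ x, a * ‖x‖ ≤ p x := by
  cases subsingleton_or_nontrivial E with
  | inl _ => exact ⟨1, one_pos, fun x => by simp [Subsingleton.elim x 0]⟩
  | inr _ =>
    have hcont : Continuous p :=
      continuousOn_univ.1 (p.convexOn.continuousOn isOpen_univ)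
    obtain ⟨u, hu, hmin⟩ := (isCompact_sphere (0 : E) 1).exists_isMinOn
      (NormedSpace.sphere_nonempty.2 zero_le_one) hcont.continuousOn
    have hu0 : u ≠ 0 := ne_zero_of_mem_unit_sphere ⟨u, hu⟩
    refine ⟨p u, (apply_nonneg p u).lt_of_ne fun h => hu0 (hp u h.symm), fun x => ?_⟩
    rcases eq_or_ne x 0 with rfl | hx
    · simp
    have hx' : 0 < ‖x‖ := norm_pos_iff.2 hx
    have hle : p u ≤ p (‖x‖⁻¹ • x) := hmin (by simp [norm_smul, hx'.ne'])
    rw [map_smul_eq_mul, norm_inv, norm_norm, inv_mul_eq_div, le_div_iff₀ hx'] at hle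
    exact hle

end NormedSpace

/-- Strong convexity of an extended-real function, phrased through real upper bounds of its values
so that no arithmetic with `⊤` occurs. -/
def StrongConvexWrt {E : Type*} [AddCommGroup E] [Module ℝ E] (N : E → ℝ) (μ : ℝ)
    (f : E → EReal) : Prop :=
  ∀ x y : E, ∀ a b : ℝ, f x ≤ a → f y ≤ b → ∀ t ∈ Icc (0 : ℝ) 1,
    f (t • x + (1 - t) • y) ≤
      ((t * a + (1 - t) * b - μ / 2 * t * (1 - t) * N (x - y) ^ 2 : ℝ) : EReal)

namespace StrongConvexWrt

section Module

variable {E : Type*} [AddCommGroup E] [Module ℝ E] {N : E → ℝ} {μ : ℝ} {f : E → EReal}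

theorem of_ereal
    (hf : ∀ x y : E, ∀ t ∈ Icc (0 : ℝ) 1, f (t • x + (1 - t) • y) ≤
      (t : EReal) * f x + ((1 - t : ℝ) : EReal) * f y
        - (((μ / 2) * t * (1 - t) * (N (x - y)) ^ 2 : ℝ) : EReal)) :
    StrongConvexWrt N μ f := by
  intro x y a b hxa hyb t ht
  have hxa' : (t : EReal) * f x ≤ t * a :=
    mul_le_mul_of_nonneg_left hxa (EReal.coe_nonneg.2 ht.1)
  have hyb' : ((1 - t : ℝ) : EReal) * f y ≤ ((1 - t : ℝ) : EReal) * b :=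
    mul_le_mul_of_nonneg_left hyb (EReal.coe_nonneg.2 (sub_nonneg.2 ht.2))
  exact (hf x y t ht).trans <|
    (EReal.sub_le_sub (add_le_add hxa' hyb') le_rfl).trans_eq (by norm_cast)

theorem add_sq_le_of_forall_le (hf : StrongConvexWrt N μ f) {x y : E} (hmin : ∀ z, f x ≤ f z)
    {a b : ℝ} (hx : f x = a) (hy : f y ≤ b) : a + μ / 2 * N (y - x) ^ 2 ≤ b := by
  have hbound : ∀ t ∈ Ioo (0 : ℝ) 1, a + μ / 2 * (1 - t) * N (y - x) ^ 2 ≤ b := by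
    intro t ht
    have key := (hmin _).trans (hf y x b a hy hx.le t (Ioo_subset_Icc_self ht))
    rw [hx] at key
    norm_cast at key
    have : t * (a + μ / 2 * (1 - t) * N (y - x) ^ 2) ≤ t * b := by linarith
    exact le_of_mul_le_mul_left this ht.1
  have hcont : Continuous fun t : ℝ => a + μ / 2 * (1 - t) * N (y - x) ^ 2 := by fun_prop
  have hlim := (hcont.tendsto 0).mono_left (nhdsWithin_le_nhds (s := Ioi 0))
  simpa using le_of_tendsto hlim (eventually_of_mem (Ioo_mem_nhdsGT one_pos) hbound)

end Module

section NormedSpace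

variable {E : Type*} [NormedAddCommGroup E] [NormedSpace ℝ E] {N : E → ℝ} {μ a : ℝ}
  {f : E → EReal}

/- `y` is compared with the point of the unit sphere around `x₀` on the segment `[x₀, y]`. -/
theorem le_of_one_le_norm_sub (hf : StrongConvexWrt N μ f) (hμ : 0 ≤ μ) (ha : 0 < a)
    (hN : ∀ x, a * ‖x‖ ≤ N x) (hbot : ∀ x, f x ≠ ⊥) {x₀ y : E} {m r : ℝ}
    (hm : ∀ z ∈ closedBall x₀ 1, (m : EReal) ≤ f z) (hr : f x₀ ≤ r)
    (hy : 1 ≤ ‖y - x₀‖) (hyR : 2 * (r - m) ≤ μ * a ^ 2 * ‖y - x₀‖) : (m : EReal) ≤ f y := by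
  rcases eq_or_ne (f y) ⊤ with hy_top | hy_top
  · simp [hy_top]
  set D := ‖y - x₀‖
  have hD : 0 < D := one_pos.trans_le hy
  set t := D⁻¹
  have htD : t * D = 1 := inv_mul_cancel₀ hD.ne'
  have ht : t ∈ Icc (0 : ℝ) 1 := ⟨inv_nonneg.2 hD.le, inv_le_one_of_one_le₀ hy⟩
  have hz : t • y + (1 - t) • x₀ ∈ closedBall x₀ 1 := by
    rw [mem_closedBall, dist_eq_norm, show t • y + (1 - t) • x₀ - x₀ = t • (y - x₀) by module,
      norm_smul, Real.norm_of_nonneg ht.1, htD]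
  have hfy : f y = (f y).toReal := (EReal.coe_toReal hy_top (hbot y)).symm
  have key := (hm _ hz).trans (hf y x₀ _ r hfy.le hr t ht)
  rw [hfy]
  norm_cast at key ⊢
  have h1t : 0 ≤ 1 - t := sub_nonneg.2 ht.2
  have hq : (1 - t) * (r - m) ≤ μ / 2 * t * (1 - t) * N (y - x₀) ^ 2 :=
    calc (1 - t) * (r - m) ≤ (1 - t) * (μ * a ^ 2 * D / 2) := by gcongr; linarith
      _ = μ / 2 * t * (1 - t) * (a * D) ^ 2 := by
        linear_combination (-(μ * a ^ 2 * (1 - t) * D / 2)) * htD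
      _ ≤ μ / 2 * t * (1 - t) * N (y - x₀) ^ 2 := by
        have : 0 ≤ μ / 2 * t * (1 - t) := mul_nonneg (mul_nonneg (by linarith) ht.1) h1t
        gcongr
        exact hN _
  have : t * m ≤ t * (f y).toReal := by linarith
  exact le_of_mul_le_mul_left this (inv_pos.2 hD)

theorem exists_forall_le [ProperSpace E] (hf : StrongConvexWrt N μ f) (hμ : 0 < μ) (ha : 0 < a)
    (hN : ∀ x, a * ‖x‖ ≤ N x) (hbot : ∀ x, f x ≠ ⊥) (hlsc : LowerSemicontinuous f) {x₀ : E}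
    (hx₀ : f x₀ ≠ ⊤) : ∃ x, ∀ y, f x ≤ f y := by
  obtain ⟨z, hz, hzmin⟩ := LowerSemicontinuousOn.exists_isMinOn
    (nonempty_closedBall.2 zero_le_one) (isCompact_closedBall x₀ 1) (hlsc.lowerSemicontinuousOn _)
  have hfz : f z = (f z).toReal :=
    (EReal.coe_toReal (ne_top_of_le_ne_top hx₀ (hzmin (mem_closedBall_self zero_le_one)))
      (hbot z)).symm
  set R := max 1 (2 * ((f x₀).toReal - (f z).toReal) / (μ * a ^ 2))
  obtain ⟨x, -, hxmin⟩ := LowerSemicontinuousOn.exists_isMinOn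
    (nonempty_closedBall.2 (zero_le_one.trans (le_max_left _ _))) (isCompact_closedBall x₀ R)
    (hlsc.lowerSemicontinuousOn _)
  refine ⟨x, fun y => ?_⟩
  by_cases hy : y ∈ closedBall x₀ R
  · exact hxmin hy
  have hyR : R < ‖y - x₀‖ := by simpa [dist_eq_norm] using hy
  calc f x ≤ f z := hxmin (closedBall_subset_closedBall (le_max_left _ _) hz)
    _ = (f z).toReal := hfz
    _ ≤ f y := by
      refine hf.le_of_one_le_norm_sub hμ.le ha hN hbot (fun w hw => hfz ▸ hzmin hw)
        (EReal.le_coe_toReal hx₀) ((le_max_left _ _).trans hyR.le) ?_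
      rw [← div_le_iff₀' (by positivity)]
      exact (le_max_right _ _).trans hyR.le

end NormedSpace

theorem sub_inner {E : Type*} [NormedAddCommGroup E] [InnerProductSpace ℝ E] {N : E → ℝ} {μ : ℝ}
    {f : E → EReal} (hf : StrongConvexWrt N μ f) (θ : E) :
    StrongConvexWrt N μ fun x => f x - ⟪θ, x⟫ := by
  intro x y a b hxa hyb t ht
  rw [EReal.sub_le_iff_le_add (.inl (EReal.coe_ne_bot _)) (.inl (EReal.coe_ne_top _))] at hxa hyb ⊢
  norm_cast at hxa hyb ⊢
  refine (hf x y _ _ hxa hyb t ht).trans (EReal.coe_le_coe_iff.2 (le_of_eq ?_))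
  rw [inner_add_right, real_inner_smul_right, real_inner_smul_right]
  ring

end StrongConvexWrt

theorem LowerSemicontinuous.sub_coe {α : Type*} [TopologicalSpace α] {f : α → EReal} {g : α → ℝ}
    (hf : LowerSemicontinuous f) (hg : Continuous g) : LowerSemicontinuous fun x => f x - g x := by
  simp_rw [sub_eq_add_neg, ← EReal.coe_neg]
  exact hf.add' (continuous_coe_real_ereal.comp hg.neg).lowerSemicontinuous fun x =>
    EReal.continuousAt_add (.inr (EReal.coe_ne_bot _)) (.inr (EReal.coe_ne_top _))

variable {E : Type*} [NormedAddCommGroup E] [InnerProductSpace ℝ E]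

noncomputable def dualNorm (N : E → ℝ) (s : E) : ℝ := sSup ((fun v => ⟪s, v⟫) '' {v | N v ≤ 1})

theorem bddAbove_inner_image {N : E → ℝ} {a : ℝ} (ha : 0 < a) (hN : ∀ x, a * ‖x‖ ≤ N x)
    (s : E) : BddAbove ((fun v => ⟪s, v⟫) '' {v | N v ≤ 1}) := by
  refine ⟨‖s‖ / a, ?_⟩
  rintro _ ⟨v, hv, rfl⟩
  have hv' : ‖v‖ ≤ 1 / a := by rw [le_div_iff₀ ha, mul_comm]; exact (hN v).trans hv
  calc ⟪s, v⟫ ≤ ‖s‖ * ‖v‖ := real_inner_le_norm s v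
    _ ≤ ‖s‖ * (1 / a) := by gcongr
    _ = ‖s‖ / a := by ring

theorem Seminorm.inner_le_dualNorm_mul {p : Seminorm ℝ E} {a : ℝ} (ha : 0 < a)
    (hp : ∀ x, a * ‖x‖ ≤ p x) (s v : E) : ⟪s, v⟫ ≤ dualNorm p s * p v := by
  rcases (apply_nonneg p v).eq_or_lt with hv | hv
  · have : v = 0 := norm_eq_zero.1 <| le_antisymm
      (le_of_mul_le_mul_left (by simpa [← hv] using hp v) ha) (norm_nonneg v)
    simp [this]
  have hmem : (p v)⁻¹ • v ∈ {v | p v ≤ 1} := by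
    simp [map_smul_eq_mul, abs_of_pos, hv, hv.ne']
  have hle : ⟪s, (p v)⁻¹ • v⟫ ≤ dualNorm p s :=
    le_csSup (bddAbove_inner_image ha hp s) ⟨_, hmem, rfl⟩
  rwa [real_inner_smul_right, inv_mul_le_iff₀ hv, mul_comm] at hle

theorem iSup_inner_sub_eq_of_forall_le {h : E → EReal} {θ x : E}
    (hmin : ∀ y, h x - ⟪θ, x⟫ ≤ h y - ⟪θ, y⟫) :
    ⨆ y, (⟪θ, y⟫ : EReal) - h y = ⟪θ, x⟫ - h x := by
  have hneg : ∀ z, (⟪θ, z⟫ : EReal) - h z = -(h z - ⟪θ, z⟫) := fun z => by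
    rw [EReal.neg_sub (.inr (EReal.coe_ne_bot _)) (.inr (EReal.coe_ne_top _)), sub_eq_add_neg,
      add_comm]
  refine le_antisymm (iSup_le fun y => ?_) (le_iSup (fun y => (⟪θ, y⟫ : EReal) - h y) x)
  rw [hneg, hneg]
  exact EReal.neg_le_neg_iff.2 (hmin y)

theorem hasGradientAt_of_sandwich [CompleteSpace E] {f : E → ℝ} {g x : E} {K : ℝ}
    (hlow : ∀ y, f x + ⟪y - x, g⟫ ≤ f y) (hup : ∀ y, f y ≤ f x + ⟪y - x, g⟫ + K * ‖y - x‖ ^ 2) :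
    HasGradientAt f g x := by
  rw [hasGradientAt_iff_isLittleO]
  refine (Asymptotics.IsBigO.of_bound |K| (Eventually.of_forall fun y => ?_)).trans_isLittleO
    (Asymptotics.isLittleO_pow_sub_sub x one_lt_two)
  have := hlow y
  have := hup y
  have : K * ‖y - x‖ ^ 2 ≤ |K| * ‖y - x‖ ^ 2 := by gcongr; exact le_abs_self K
  rw [real_inner_comm, Real.norm_eq_abs, norm_pow, norm_norm, abs_le]
  constructor <;> nlinarith [sq_nonneg ‖y - x‖, abs_nonneg K]

/- Here `f θ` stands for the value of a primal function at the point `x θ`, so `hgrowth` says that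
`x θ` minimises `y ↦ f y - ⟪θ, y⟫` over the family with quadratic growth, and
`θ ↦ ⟪θ, x θ⟫ - f θ` is the conjugate. -/
section QuadraticGrowth

variable {x : E → E} {f : E → ℝ} {μ : ℝ} {N : E → ℝ}

theorem add_inner_le_of_quadraticGrowth (hμ : 0 ≤ μ)
    (hgrowth : ∀ θ θ', f θ - ⟪θ, x θ⟫ + μ / 2 * N (x θ' - x θ) ^ 2 ≤ f θ' - ⟪θ, x θ'⟫)
    (θ θ' : E) : ⟪θ, x θ⟫ - f θ + ⟪θ' - θ, x θ⟫ ≤ ⟪θ', x θ'⟫ - f θ' := by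
  have := hgrowth θ' θ
  have : 0 ≤ μ / 2 * N (x θ - x θ') ^ 2 := by positivity
  rw [inner_sub_left]
  linarith

theorem le_add_inner_add_sq_of_quadraticGrowth {D : E → ℝ} (hμ : 0 < μ)
    (hgrowth : ∀ θ θ', f θ - ⟪θ, x θ⟫ + μ / 2 * N (x θ' - x θ) ^ 2 ≤ f θ' - ⟪θ, x θ'⟫)
    (hDN : ∀ s v, ⟪s, v⟫ ≤ D s * N v) (θ θ' : E) :
    ⟪θ', x θ'⟫ - f θ' ≤ ⟪θ, x θ⟫ - f θ + ⟪θ' - θ, x θ⟫ + 1 / (2 * μ) * D (θ' - θ) ^ 2 := by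
  set d := D (θ' - θ)
  set u := N (x θ' - x θ)
  have hpair : ⟪θ' - θ, x θ' - x θ⟫ ≤ d * u := hDN _ _
  have hamgm : d * u - μ / 2 * u ^ 2 ≤ 1 / (2 * μ) * d ^ 2 := by
    have : 0 ≤ (d - μ * u) ^ 2 / (2 * μ) := by positivity
    have e : (d - μ * u) ^ 2 / (2 * μ) = 1 / (2 * μ) * d ^ 2 - (d * u - μ / 2 * u ^ 2) := by
      field_simp
      ring
    linarith
  have := hgrowth θ θ'
  simp only [inner_sub_left, inner_sub_right] at hpair ⊢
  linarith

theorem hasGradientAt_of_quadraticGrowth [CompleteSpace E] {a : ℝ} (hμ : 0 < μ) (ha : 0 < a)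
    (hN : ∀ v, a * ‖v‖ ≤ N v)
    (hgrowth : ∀ θ θ', f θ - ⟪θ, x θ⟫ + μ / 2 * N (x θ' - x θ) ^ 2 ≤ f θ' - ⟪θ, x θ'⟫)
    (θ : E) : HasGradientAt (fun θ => ⟪θ, x θ⟫ - f θ) (x θ) θ := by
  have hpair : ∀ s v, ⟪s, v⟫ ≤ ‖s‖ / a * N v := fun s v =>
    calc ⟪s, v⟫ ≤ ‖s‖ * ‖v‖ := real_inner_le_norm s v
      _ = ‖s‖ / a * (a * ‖v‖) := by field_simp
      _ ≤ ‖s‖ / a * N v := mul_le_mul_of_nonneg_left (hN v) (div_nonneg (norm_nonneg s) ha.le)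
  refine hasGradientAt_of_sandwich (K := 1 / (2 * μ * a ^ 2))
    (add_inner_le_of_quadraticGrowth hμ.le hgrowth θ) fun θ' => ?_
  convert le_add_inner_add_sq_of_quadraticGrowth hμ hgrowth hpair θ θ' using 2
  field_simp

end QuadraticGrowth

/-- If `h : ℝⁿ → ℝ ∪ {∞}` is proper, closed, and `μ`-strongly convex w.r.t. a norm `N`,
then its Fenchel conjugate `C = h*` is everywhere finite, differentiable, and
`(1/μ)`-smooth w.r.t. the dual norm `Nd`:
`h*(θ') ≤ h*(θ) + ⟨θ'-θ, ∇h*(θ)⟩ + (1/(2μ)) Nd(θ'-θ)²`. -/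
theorem stmt8 {n : ℕ} (N Nd : EuclideanSpace ℝ (Fin n) → ℝ)
    (hN1 : ∀ x y, N (x + y) ≤ N x + N y)
    (hN2 : ∀ (t : ℝ) (x : EuclideanSpace ℝ (Fin n)), N (t • x) = |t| * N x)
    (hN3 : ∀ x, N x = 0 ↔ x = 0)
    (hNd : ∀ s, Nd s = sSup ((fun v => ⟪s, v⟫) '' {v | N v ≤ 1}))
    (h : EuclideanSpace ℝ (Fin n) → EReal) (μ : ℝ) (hμ : 0 < μ)
    (hproper₁ : ∀ x, h x ≠ ⊥) (hproper₂ : ∃ x, h x ≠ ⊤)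
    (hclosed : LowerSemicontinuous h)
    (hsc : ∀ x y : EuclideanSpace ℝ (Fin n), ∀ t ∈ Set.Icc (0:ℝ) 1,
      h (t • x + (1 - t) • y) ≤
        (t : EReal) * h x + ((1 - t : ℝ) : EReal) * h y
          - (((μ / 2) * t * (1 - t) * (N (x - y))^2 : ℝ) : EReal))
    (C : EuclideanSpace ℝ (Fin n) → EReal)
    (hC : ∀ θ, C θ = ⨆ x, ((⟪θ, x⟫ : EReal) - h x)) :
    (∀ θ, C θ ≠ ⊤ ∧ C θ ≠ ⊥) ∧
    ∃ g : EuclideanSpace ℝ (Fin n) → EuclideanSpace ℝ (Fin n),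
      (∀ θ, HasGradientAt (fun d => (C d).toReal) (g θ) θ) ∧
      (∀ θ θ', (C θ').toReal ≤ (C θ).toReal + ⟪θ' - θ, g θ⟫
        + (1 / (2 * μ)) * (Nd (θ' - θ))^2) := by
  let p : Seminorm ℝ (EuclideanSpace ℝ (Fin n)) :=
    Seminorm.of N hN1 fun t x => by rw [Real.norm_eq_abs, hN2]
  obtain ⟨a, ha, haN⟩ := p.exists_pos_mul_norm_le fun x => (hN3 x).1
  have hf : StrongConvexWrt N μ h := .of_ereal hsc
  obtain ⟨x₀, hx₀⟩ := hproper₂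
  have hx₀' : ∀ θ, h x₀ - ⟪θ, x₀⟫ ≠ ⊤ := fun θ => by
    simpa [sub_eq_add_neg, EReal.add_ne_top_iff_ne_top_left] using hx₀
  choose g hg using fun θ => (hf.sub_inner θ).exists_forall_le hμ ha haN
    (fun x => by simpa [sub_eq_add_neg, EReal.add_ne_bot_iff] using hproper₁ x)
    (hclosed.sub_coe (by fun_prop)) (hx₀' θ)
  have hfin : ∀ θ, h (g θ) = (h (g θ)).toReal := fun θ => by
    refine (EReal.coe_toReal (fun htop => hx₀' θ ?_) (hproper₁ _)).symm
    simpa [htop, EReal.top_sub_coe] using hg θ x₀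
  have hCg : ∀ θ, C θ = ((⟪θ, g θ⟫ - (h (g θ)).toReal : ℝ) : EReal) := fun θ => by
    rw [hC, iSup_inner_sub_eq_of_forall_le (hg θ), hfin θ]
    norm_cast
  have hgrowth : ∀ θ θ', (h (g θ)).toReal - ⟪θ, g θ⟫ + μ / 2 * N (g θ' - g θ) ^ 2 ≤
      (h (g θ')).toReal - ⟪θ, g θ'⟫ := fun θ θ' =>
    (hf.sub_inner θ).add_sq_le_of_forall_le (hg θ) (by rw [hfin θ]; norm_cast)
      (by rw [hfin θ']; norm_cast)
  have hCreal : ∀ θ, (C θ).toReal = ⟪θ, g θ⟫ - (h (g θ)).toReal := fun θ => by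
    rw [hCg, EReal.toReal_coe]
  refine ⟨fun θ => by rw [hCg]; exact ⟨EReal.coe_ne_top _, EReal.coe_ne_bot _⟩, g,
    fun θ => ?_, fun θ θ' => ?_⟩
  · rw [funext hCreal]
    exact hasGradientAt_of_quadraticGrowth hμ ha haN hgrowth θ
  · rw [hCreal, hCreal, hNd]
    exact le_add_inner_add_sq_of_quadraticGrowth hμ hgrowth (p.inner_le_dualNorm_mul ha haN) θ θ'
end

section
/- (ODA regret bound) Let h be proper, closed and μ-strongly convex with respect to ‖·‖, let a_0,…,a_{n−1} > 0 with A_k = Σ_{i≤k} a_i, let η > 0, g^{−1} = 0, and define θ_k = −η Σ_{i=0}^{k} a_i g^i, θ_{−1} = 0, ẑ_k ∈ ∂h*(θ_{k−1} − η a_k g^{k−1}) for k = 0,…,n−1 (so ẑ_0 ∈ ∂h*(0)). Then for every x, Σ_{k=0}^{n−1} a_k ⟨g^k, ẑ_k − x⟩ ≤ (h(x) − inf h)/η + (η/(2μ)) Σ_{k=0}^{n−1} a_k² ‖g^k − g^{k−1}‖_*². -/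
open RealInnerProductSpace

/-!
Strong convexity of `h` with respect to `N` gives quadratic growth of `h` around every maximizer
`z` of `⟪s, ·⟫ - h`; together with `⟪w, v⟫ ≤ ‖w‖_* N v` and AM-GM this is the `(1/μ)`-smoothness
bound `h*(s + w) ≤ h*(s) + ⟪w, z⟫ + ‖w‖_*² / (2μ)`. Applied at `s = θ_{k-1} - η a_k g^{k-1}`, where
`ẑ_k` is taken, with `w = -η a_k (g^k - g^{k-1})`, it telescopes to
`h*(θ_{n-1}) ≤ -inf h - η ∑ a_k ⟨g^k, ẑ_k⟩ + (η² / 2μ) ∑ a_k² ‖g^k - g^{k-1}‖_*²`,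
and `h*(θ_{n-1}) ≥ ⟪θ_{n-1}, x⟫ - h x` is the regret bound.
-/

open Finset Filter Topology

section

variable {E : Type*} [NormedAddCommGroup E] [InnerProductSpace ℝ E]

namespace Seminorm

lemma exists_pos_mul_norm_le_s9 [FiniteDimensional ℝ E] (p : Seminorm ℝ E)
    (hp : ∀ x, p x = 0 → x = 0) : ∃ c > 0, ∀ x, c * ‖x‖ ≤ p x := by
  rcases subsingleton_or_nontrivial E with hE | hE
  · exact ⟨1, one_pos, fun x => by simp [Subsingleton.elim x 0]⟩
  have hcont : Continuous p := p.convexOn.locallyLipschitz.continuous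
  obtain ⟨u, hu, hmin⟩ := (isCompact_sphere (0 : E) 1).exists_isMinOn
    (NormedSpace.sphere_nonempty.2 zero_le_one) hcont.continuousOn
  have hu0 : u ≠ 0 := ne_zero_of_mem_sphere one_ne_zero ⟨u, hu⟩
  refine ⟨p u, (apply_nonneg p u).lt_of_ne' (mt (hp u) hu0), fun x => ?_⟩
  rcases eq_or_ne x 0 with rfl | hx
  · simp
  have hx' : 0 < ‖x‖ := norm_pos_iff.2 hx
  have hmem : ‖x‖⁻¹ • x ∈ Metric.sphere (0 : E) 1 := by
    rw [mem_sphere_zero_iff_norm, norm_smul, norm_inv, norm_norm, inv_mul_cancel₀ hx'.ne']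
  have : p u ≤ p (‖x‖⁻¹ • x) := hmin hmem
  rw [map_smul_eq_mul, norm_inv, norm_norm, le_inv_mul_iff₀ hx'] at this
  linarith

lemma bddAbove_inner_image [FiniteDimensional ℝ E] (p : Seminorm ℝ E)
    (hp : ∀ x, p x = 0 → x = 0) (w : E) : BddAbove ((fun v => ⟪w, v⟫) '' {v | p v ≤ 1}) := by
  obtain ⟨c, hc, hpc⟩ := p.exists_pos_mul_norm_le_s9 hp
  refine ⟨‖w‖ * c⁻¹, ?_⟩
  rintro _ ⟨v, hv, rfl⟩
  have hv' : ‖v‖ ≤ c⁻¹ * 1 := (le_inv_mul_iff₀ hc).2 ((hpc v).trans hv)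
  calc ⟪w, v⟫ ≤ ‖w‖ * ‖v‖ := real_inner_le_norm w v
    _ ≤ ‖w‖ * c⁻¹ := by rw [mul_one] at hv'; gcongr

lemma inner_le_sSup_mul [FiniteDimensional ℝ E] (p : Seminorm ℝ E)
    (hp : ∀ x, p x = 0 → x = 0) (w v : E) :
    ⟪w, v⟫ ≤ sSup ((fun v => ⟪w, v⟫) '' {v | p v ≤ 1}) * p v := by
  rcases (apply_nonneg p v).eq_or_lt with hv | hv
  · simp [hp v hv.symm]
  have hunit : p ((p v)⁻¹ • v) ≤ 1 := by
    rw [map_smul_eq_mul, Real.norm_eq_abs, abs_inv, abs_of_pos hv, inv_mul_cancel₀ hv.ne']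
  have : ⟪w, (p v)⁻¹ • v⟫ ≤ sSup ((fun v => ⟪w, v⟫) '' {v | p v ≤ 1}) :=
    le_csSup (p.bddAbove_inner_image hp w) ⟨_, hunit, rfl⟩
  rwa [real_inner_smul_right, inv_mul_le_iff₀ hv, mul_comm] at this

end Seminorm

/-- Strong convexity measured by an arbitrary `N` instead of the ambient norm used by
`StrongConvexOn`. -/
def StronglyConvexWrt (N : E → ℝ) (μ : ℝ) (h : E → ℝ) : Prop :=
  ∀ x y : E, ∀ t ∈ Set.Icc (0:ℝ) 1,
    h (t • x + (1 - t) • y) ≤ t * h x + (1 - t) * h y - (μ / 2) * t * (1 - t) * (N (x - y)) ^ 2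

namespace StronglyConvexWrt

variable {N : E → ℝ} {μ : ℝ} {h : E → ℝ} {s z : E}

lemma quadratic_growth (hsc : StronglyConvexWrt N μ h)
    (hz : ∀ x, ⟪s, x⟫ - h x ≤ ⟪s, z⟫ - h z) (x : E) :
    h z + ⟪s, x - z⟫ + μ / 2 * N (x - z) ^ 2 ≤ h x := by
  -- compare `z` with `t • x + (1 - t) • z`, divide by `t` and let `t → 0⁺`
  set A := ⟪s, x - z⟫ + h z - h x
  set B := μ / 2 * N (x - z) ^ 2
  have hstep : ∀ t ∈ Set.Ioc (0:ℝ) 1, A + B * (1 - t) ≤ 0 := by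
    rintro t ⟨ht0, ht1⟩
    have hmax := hz (t • x + (1 - t) • z)
    have hconv := hsc x z t ⟨ht0.le, ht1⟩
    rw [inner_add_right, real_inner_smul_right, real_inner_smul_right] at hmax
    have : t * (A + B * (1 - t)) ≤ 0 := by
      simp only [A, B, inner_sub_right]
      linarith
    exact nonpos_of_mul_nonpos_right this ht0
  have hlim : Tendsto (fun t => A + B * (1 - t)) (𝓝[>] 0) (𝓝 (A + B * (1 - 0))) :=
    (Continuous.tendsto (by fun_prop) 0).mono_left nhdsWithin_le_nhds
  have := le_of_tendsto hlim (eventually_of_mem (Ioc_mem_nhdsGT one_pos) hstep)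
  simp only [A, B, sub_zero, mul_one] at this ⊢
  linarith

/-- `(1/μ)`-smoothness of `h*` at `s`, for a `w` of dual norm at most `D`. -/
lemma inner_add_sub_le (hsc : StronglyConvexWrt N μ h) (hμ : 0 < μ)
    (hz : ∀ x, ⟪s, x⟫ - h x ≤ ⟪s, z⟫ - h z) {w : E} {D : ℝ} (hD : ∀ v, ⟪w, v⟫ ≤ D * N v)
    (x : E) : ⟪s + w, x⟫ - h x ≤ ⟪s, z⟫ - h z + ⟪w, z⟫ + D ^ 2 / (2 * μ) := by
  have hgrowth := hsc.quadratic_growth hz x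
  have hdual := hD (x - z)
  have hamgm : D * N (x - z) ≤ μ / 2 * N (x - z) ^ 2 + D ^ 2 / (2 * μ) := by
    have hsq : μ / 2 * N (x - z) ^ 2 + D ^ 2 / (2 * μ) - D * N (x - z)
        = (μ * N (x - z) - D) ^ 2 / (2 * μ) := by
      field_simp
      ring
    have hnonneg : 0 ≤ (μ * N (x - z) - D) ^ 2 / (2 * μ) := by positivity
    linarith
  rw [inner_add_left]
  rw [inner_sub_right] at hgrowth hdual
  linarith

end StronglyConvexWrt

section OptimisticDualAveraging

variable {N : E → ℝ} {μ : ℝ} {h : E → ℝ} {u₀ : E} {w v z : ℕ → E} {D : ℕ → ℝ}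

theorem StronglyConvexWrt.optimistic_potential_le (hsc : StronglyConvexWrt N μ h) (hμ : 0 < μ)
    (hu₀ : ∀ u, h u₀ ≤ h u) (n : ℕ)
    (hz : ∀ k < n, ∀ x, ⟪∑ i ∈ range k, w i + v k, x⟫ - h x ≤
      ⟪∑ i ∈ range k, w i + v k, z k⟫ - h (z k))
    (hD : ∀ k < n, ∀ x, ⟪w k - v k, x⟫ ≤ D k * N x) (y : E) :
    ⟪∑ i ∈ range n, w i, y⟫ - h y ≤ -h u₀ + ∑ k ∈ range n, (⟪w k, z k⟫ + D k ^ 2 / (2 * μ)) := by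
  induction n generalizing y with
  | zero => simpa using hu₀ y
  | succ m ih =>
    have hstep := hsc.inner_add_sub_le hμ (hz m m.lt_succ_self) (hD m m.lt_succ_self) y
    have hsum : ∑ i ∈ range m, w i + v m + (w m - v m) = ∑ i ∈ range (m + 1), w i := by
      rw [sum_range_succ]
      abel
    have hprev := ih (fun k hk => hz k (hk.trans m.lt_succ_self))
      (fun k hk => hD k (hk.trans m.lt_succ_self)) (z m)
    rw [hsum, inner_add_left, inner_sub_left] at hstep
    rw [sum_range_succ (fun k => ⟪w k, z k⟫ + D k ^ 2 / (2 * μ))]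
    linarith

theorem StronglyConvexWrt.optimistic_regret_le (hsc : StronglyConvexWrt N μ h) (hμ : 0 < μ)
    (hu₀ : ∀ u, h u₀ ≤ h u) (n : ℕ)
    (hz : ∀ k < n, ∀ x, ⟪∑ i ∈ range k, w i + v k, x⟫ - h x ≤
      ⟪∑ i ∈ range k, w i + v k, z k⟫ - h (z k))
    (hD : ∀ k < n, ∀ x, ⟪w k - v k, x⟫ ≤ D k * N x) (x : E) :
    ∑ k ∈ range n, ⟪w k, x - z k⟫ ≤ h x - h u₀ + ∑ k ∈ range n, D k ^ 2 / (2 * μ) := by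
  have hpot := hsc.optimistic_potential_le hμ hu₀ n hz hD x
  simp only [inner_sub_right, sum_sub_distrib, ← sum_inner, sum_add_distrib] at hpot ⊢
  linarith

end OptimisticDualAveraging

end

theorem stmt9_general {d : ℕ} (N Nd : EuclideanSpace ℝ (Fin d) → ℝ)
    (hN1 : ∀ x y, N (x + y) ≤ N x + N y)
    (hN2 : ∀ (t : ℝ) (x : EuclideanSpace ℝ (Fin d)), N (t • x) = |t| * N x)
    (hN3 : ∀ x, N x = 0 ↔ x = 0)
    (hNd : ∀ s, Nd s = sSup ((fun v => ⟪s, v⟫) '' {v | N v ≤ 1}))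
    (h : EuclideanSpace ℝ (Fin d) → ℝ) (μ : ℝ) (hμ : 0 < μ)
    (hsc : ∀ x y : EuclideanSpace ℝ (Fin d), ∀ t ∈ Set.Icc (0:ℝ) 1,
      h (t • x + (1 - t) • y) ≤
        t * h x + (1 - t) * h y - (μ / 2) * t * (1 - t) * (N (x - y))^2)
    (u0 : EuclideanSpace ℝ (Fin d)) (hu0 : ∀ u, h u0 ≤ h u)
    (n : ℕ) (a : ℕ → ℝ) (η : ℝ) (hη : 0 < η)
    (g : ℕ → EuclideanSpace ℝ (Fin d))
    (gprev : ℕ → EuclideanSpace ℝ (Fin d))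
    (z : ℕ → EuclideanSpace ℝ (Fin d))
    (hz : ∀ k < n, ∀ x,
      ⟪(-η) • ((∑ i ∈ Finset.range k, a i • g i) + a k • gprev k), x⟫ - h x ≤
      ⟪(-η) • ((∑ i ∈ Finset.range k, a i • g i) + a k • gprev k), z k⟫ - h (z k)) :
    ∀ x, ∑ k ∈ Finset.range n, a k * ⟪g k, z k - x⟫ ≤
      (h x - h u0) / η
        + (η / (2 * μ)) * ∑ k ∈ Finset.range n, (a k)^2 * (Nd (g k - gprev k))^2 := by
  intro x
  let p : Seminorm ℝ (EuclideanSpace ℝ (Fin d)) := Seminorm.of N hN1 hN2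
  have hdual : ∀ (c : ℝ) u v, ⟪c • u, v⟫ ≤ |c| * Nd u * N v := fun c u v => by
    rw [real_inner_smul_left, ← real_inner_smul_right, hNd, mul_comm |c|, mul_assoc, ← hN2]
    exact p.inner_le_sSup_mul (fun v => (hN3 v).1) u (c • v)
  have hz' : ∀ k < n, ∀ x, ⟪∑ i ∈ range k, (-η * a i) • g i + (-η * a k) • gprev k, x⟫ - h x ≤
      ⟪∑ i ∈ range k, (-η * a i) • g i + (-η * a k) • gprev k, z k⟫ - h (z k) := by
    simpa only [smul_add, smul_sum, smul_smul] using hz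
  have hreg := StronglyConvexWrt.optimistic_regret_le hsc hμ hu0 n hz'
    (fun k _ v => by rw [← smul_sub]; exact hdual (-η * a k) (g k - gprev k) v) x
  have hregret : ∑ k ∈ range n, ⟪(-η * a k) • g k, x - z k⟫
      = η * ∑ k ∈ range n, a k * ⟪g k, z k - x⟫ := by
    rw [mul_sum]
    refine sum_congr rfl fun k _ => ?_
    rw [real_inner_smul_left, ← neg_sub (z k) x, inner_neg_right]
    ring
  have hpenalty : ∑ k ∈ range n, (|-η * a k| * Nd (g k - gprev k)) ^ 2 / (2 * μ)
      = η * (η / (2 * μ) * ∑ k ∈ range n, a k ^ 2 * Nd (g k - gprev k) ^ 2) := by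
    rw [mul_sum, mul_sum]
    refine sum_congr rfl fun k _ => ?_
    rw [mul_pow, sq_abs]
    ring
  rw [hregret, hpenalty] at hreg
  rw [div_add' _ _ _ hη.ne', le_div_iff₀ hη]
  linarith

/-- ODA regret bound: with `h` `μ`-strongly convex w.r.t. `N` (attained infimum at `u0`),
positive weights `a`, `η > 0`, `g^{-1} = 0`, and iterates
`ẑ_k ∈ ∂h*(-η (∑_{i<k} a_i g^i + a_k g^{k-1}))` (i.e. maximizers of the linearized
objective), for every comparator `x`:
`∑_k a_k ⟨g^k, ẑ_k - x⟩ ≤ (h x - inf h)/η + (η/(2μ)) ∑_k a_k² ‖g^k - g^{k-1}‖_*²`. -/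
theorem stmt9 {d : ℕ} (N Nd : EuclideanSpace ℝ (Fin d) → ℝ)
    (hN1 : ∀ x y, N (x + y) ≤ N x + N y)
    (hN2 : ∀ (t : ℝ) (x : EuclideanSpace ℝ (Fin d)), N (t • x) = |t| * N x)
    (hN3 : ∀ x, N x = 0 ↔ x = 0)
    (hNd : ∀ s, Nd s = sSup ((fun v => ⟪s, v⟫) '' {v | N v ≤ 1}))
    (h : EuclideanSpace ℝ (Fin d) → ℝ) (μ : ℝ) (hμ : 0 < μ)
    (hsc : ∀ x y : EuclideanSpace ℝ (Fin d), ∀ t ∈ Set.Icc (0:ℝ) 1,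
      h (t • x + (1 - t) • y) ≤
        t * h x + (1 - t) * h y - (μ / 2) * t * (1 - t) * (N (x - y))^2)
    (u0 : EuclideanSpace ℝ (Fin d)) (hu0 : ∀ u, h u0 ≤ h u)
    (n : ℕ) (a : ℕ → ℝ) (ha : ∀ k, 0 < a k) (η : ℝ) (hη : 0 < η)
    (g : ℕ → EuclideanSpace ℝ (Fin d))
    (gprev : ℕ → EuclideanSpace ℝ (Fin d))
    (hgprev : ∀ k, gprev k = if k = 0 then 0 else g (k - 1))
    (z : ℕ → EuclideanSpace ℝ (Fin d))
    (hz : ∀ k < n, ∀ x,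
      ⟪(-η) • ((∑ i ∈ Finset.range k, a i • g i) + a k • gprev k), x⟫ - h x ≤
      ⟪(-η) • ((∑ i ∈ Finset.range k, a i • g i) + a k • gprev k), z k⟫ - h (z k)) :
    ∀ x, ∑ k ∈ Finset.range n, a k * ⟪g k, z k - x⟫ ≤
      (h x - h u0) / η
        + (η / (2 * μ)) * ∑ k ∈ Finset.range n, (a k)^2 * (Nd (g k - gprev k))^2 :=
  stmt9_general N Nd hN1 hN2 hN3 hNd h μ hμ hsc u0 hu0 n a η hη g gprev z hz
end

section
/- (Anytime online-to-batch) Let f be convex and differentiable, let a_0,…,a_{n−1} > 0 with A_k = Σ_{i≤k} a_i, and let sequences z^k, x^k satisfy x^0 = z^0 and x^k = (1 − a_k/A_k) x^{k−1} + (a_k/A_k) z^k for k ≥ 1 (so x^k = (1/A_k) Σ_{i=0}^{k} a_i z^i). Then for every x, A_{n−1}(f(x^{n−1}) − f(x)) ≤ Σ_{k=0}^{n−1} a_k ⟨∇f(x^k), z^k − x⟩. -/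
/-! The potential `A_k (f(x^k) - f(p))` grows at each step by at most `a_k ⟪∇f(x^k), z^k - p⟫`:
the gradient inequalities at `x^k` towards `x^{k-1}` and towards `p`, weighted by `A_{k-1}` and
`a_k`, add up to exactly this bound because `A_k x^k = A_{k-1} x^{k-1} + a_k z^k`. Setting
`A_{-1} = 0` makes the first step an instance of the same estimate. -/

open RealInnerProductSpace

theorem add_smul_eq_of_eq_weighted_average {V : Type*} [AddCommGroup V] [Module ℝ V]
    {B b : ℝ} {x w z : V} (h : B + b ≠ 0)
    (hx : x = (1 - b / (B + b)) • w + (b / (B + b)) • z) :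
    (B + b) • x = B • w + b • z := by
  have hB : (B + b) * (1 - b / (B + b)) = B := by field_simp; ring
  rw [hx, smul_add, smul_smul, smul_smul, hB, mul_div_cancel₀ b h]

section

variable {E : Type*} [NormedAddCommGroup E] [InnerProductSpace ℝ E] [CompleteSpace E]

theorem ConvexOn.add_inner_le_of_hasGradientAt {s : Set E} {f : E → ℝ} {g u v : E}
    (hf : ConvexOn ℝ s f) (hu : u ∈ s) (hv : v ∈ s) (hg : HasGradientAt f g u) :
    f u + ⟪g, v - u⟫ ≤ f v := by
  let line : ℝ →ᵃ[ℝ] E := AffineMap.lineMap u v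
  have hline : HasDerivAt (f ∘ line) ⟪g, v - u⟫ 0 := by
    have hg' : HasFDerivAt f (InnerProductSpace.toDual ℝ E g) (line 0) := by
      simpa [line] using hg.hasFDerivAt
    simpa using hg'.comp_hasDerivAt (0 : ℝ) AffineMap.hasDerivAt_lineMap
  have := (hf.comp_affineMap line).le_slope_of_hasDerivAt (x := 0) (y := 1)
    (by simpa [line] using hu) (by simpa [line] using hv) one_pos hline
  simp only [slope_def_field, Function.comp_apply, line, AffineMap.lineMap_apply_one,
    AffineMap.lineMap_apply_zero, sub_zero, div_one] at this
  linarith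

theorem ConvexOn.onlineToBatch_step {s : Set E} {f : E → ℝ} {g y w z p : E} {B b : ℝ}
    (hf : ConvexOn ℝ s f) (hy : y ∈ s) (hw : w ∈ s) (hp : p ∈ s) (hg : HasGradientAt f g y)
    (hB : 0 ≤ B) (hb : 0 ≤ b) (hyw : (B + b) • y = B • w + b • z) :
    (B + b) * (f y - f p) ≤ B * (f w - f p) + b * ⟪g, z - p⟫ := by
  have hgw := hf.add_inner_le_of_hasGradientAt hy hw hg
  have hgp := hf.add_inner_le_of_hasGradientAt hy hp hg
  have hinner : B * ⟪g, w - y⟫ + b * ⟪g, p - y⟫ = -(b * ⟪g, z - p⟫) := by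
    rw [← inner_smul_right, ← inner_smul_right, ← inner_add_right, ← inner_smul_right,
      ← inner_neg_right]
    congr 1
    linear_combination (norm := module) -hyw
  nlinarith [mul_le_mul_of_nonneg_left hgw hB, mul_le_mul_of_nonneg_left hgp hb]

theorem ConvexOn.onlineToBatch {f : E → ℝ} {g : E → E}
    (hf : ConvexOn ℝ Set.univ f) (hg : ∀ y, HasGradientAt f (g y) y)
    {a A : ℕ → ℝ} (ha : ∀ k, 0 < a k) (hA : ∀ k, A k = ∑ i ∈ Finset.range (k + 1), a i)
    {x z : ℕ → E} (hx0 : x 0 = z 0)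
    (hrec : ∀ k, 1 ≤ k → x k = (1 - a k / A k) • x (k - 1) + (a k / A k) • z k) (p : E) (m : ℕ) :
    A m * (f (x m) - f p) ≤ ∑ k ∈ Finset.range (m + 1), a k * ⟪g (x k), z k - p⟫ := by
  induction m with
  | zero =>
    have := hf.onlineToBatch_step (B := 0) (w := p) (z := z 0) (p := p) trivial trivial trivial
      (hg (x 0)) le_rfl (ha 0).le (by simp [hx0])
    simpa [hA] using this
  | succ m ih =>
    have hA_succ : A (m + 1) = A m + a (m + 1) := by rw [hA, hA, Finset.sum_range_succ]
    have hA_nonneg : 0 ≤ A m := hA m ▸ Finset.sum_nonneg fun i _ => (ha i).le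
    have hx : (A m + a (m + 1)) • x (m + 1) = A m • x m + a (m + 1) • z (m + 1) :=
      add_smul_eq_of_eq_weighted_average (by linarith [ha (m + 1)])
        (by simpa [hA_succ] using hrec (m + 1) (by omega))
    calc A (m + 1) * (f (x (m + 1)) - f p)
        ≤ A m * (f (x m) - f p) + a (m + 1) * ⟪g (x (m + 1)), z (m + 1) - p⟫ := hA_succ ▸
          hf.onlineToBatch_step trivial trivial trivial (hg _) hA_nonneg (ha (m + 1)).le hx
      _ ≤ ∑ k ∈ Finset.range (m + 1 + 1), a k * ⟪g (x k), z k - p⟫ := by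
          rw [Finset.sum_range_succ]; linarith

end

/-- Anytime online-to-batch: if `f` is convex and differentiable with gradient `g`,
and `x^k` is the running weighted average of `z^0, …, z^k` (via the recursion
`x^k = (1 - a_k/A_k) x^{k-1} + (a_k/A_k) z^k`, `x^0 = z^0`), then for every `x`,
`A_{n-1} (f(x^{n-1}) - f(x)) ≤ ∑_{k<n} a_k ⟨∇f(x^k), z^k - x⟩`. -/
theorem stmt12 {d : ℕ}
    (f : EuclideanSpace ℝ (Fin d) → ℝ)
    (g : EuclideanSpace ℝ (Fin d) → EuclideanSpace ℝ (Fin d))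
    (hconv : ConvexOn ℝ Set.univ f)
    (hgrad : ∀ p, HasGradientAt f (g p) p)
    (n : ℕ) (hn : 1 ≤ n)
    (a : ℕ → ℝ) (ha : ∀ k, 0 < a k)
    (A : ℕ → ℝ) (hA : ∀ k, A k = ∑ i ∈ Finset.range (k+1), a i)
    (x z : ℕ → EuclideanSpace ℝ (Fin d))
    (hx0 : x 0 = z 0)
    (hrec : ∀ k, 1 ≤ k → x k = (1 - a k / A k) • x (k-1) + (a k / A k) • z k) :
    ∀ p, A (n-1) * (f (x (n-1)) - f p) ≤
      ∑ k ∈ Finset.range n, a k * ⟪g (x k), z k - p⟫ := by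
  intro p
  obtain ⟨m, rfl⟩ := Nat.exists_eq_add_of_le' hn
  simpa using hconv.onlineToBatch hgrad ha hA hx0 hrec p m
end
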